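/- arXiv:2105.06130 — 3 statements merged into one kernel-verified Lean document; each statement's English description precedes it below -/
import Mathlib

section
/- Let u : ℝ^N × (0,∞) → [0,∞) be measurable with (K∗u^p)u^q ∈ L¹_loc(ℝ^N × [0,∞)), where p, q > 0. Then u^{(p+q)/2} ∈ L¹_loc(ℝ^N × [0,∞)), i.e., for every R > 0 and T > 0, ∫₀^T ∫_{B_R(0)} u(x,t)^{(p+q)/2} dx dt < ∞. -/
open MeasureTheory Metric Set Filter
open scoped RealInnerProductSpace ENNReal

noncomputable section

/-- A positive continuous kernel with positive liminf at the origin is bounded below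
by a positive constant on any punctured ball. -/
lemma kernel_lower_aux {N : ℕ} (K : EuclideanSpace ℝ (Fin N) → ℝ)
    (hKcont : ContinuousOn K {(0 : EuclideanSpace ℝ (Fin N))}ᶜ)
    (hKpos : ∀ x : EuclideanSpace ℝ (Fin N), x ≠ 0 → 0 < K x)
    (hKliminf : ∃ ε : ℝ, 0 < ε ∧ ∀ᶠ x in nhdsWithin (0 : EuclideanSpace ℝ (Fin N)) {0}ᶜ, ε ≤ K x)
    (M : ℝ) :
    ∃ δ : ℝ, 0 < δ ∧ ∀ z : EuclideanSpace ℝ (Fin N), z ≠ 0 → ‖z‖ ≤ M → δ ≤ K z := by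
  obtain ⟨ε, hε, hev⟩ := hKliminf
  rw [eventually_nhdsWithin_iff] at hev
  rw [Metric.eventually_nhds_iff] at hev
  obtain ⟨r, hr, hball⟩ := hev
  set S : Set (EuclideanSpace ℝ (Fin N)) := closedBall 0 M \ ball 0 (r/2) with hS
  have hScpt : IsCompact S := (isCompact_closedBall 0 M).diff isOpen_ball
  have hSsub : S ⊆ {(0 : EuclideanSpace ℝ (Fin N))}ᶜ := by
    intro z hz
    simp only [mem_compl_iff, mem_singleton_iff]
    intro h0
    exact hz.2 (by simp [h0, half_pos hr])
  by_cases hne : S.Nonempty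
  · obtain ⟨z₀, hz₀S, hmin⟩ := hScpt.exists_isMinOn hne (hKcont.mono hSsub)
    refine ⟨min ε (K z₀), lt_min hε (hKpos z₀ (hSsub hz₀S)), ?_⟩
    intro z hz hzM
    by_cases hcase : ‖z‖ < r/2
    · refine (min_le_left _ _).trans (hball (show dist z 0 < r by rw [dist_zero_right]; linarith) hz)
    · exact (min_le_right _ _).trans (hmin ⟨mem_closedBall_zero_iff.2 hzM, by
        simpa [mem_ball, dist_zero_right] using hcase⟩)
  · refine ⟨ε, hε, ?_⟩
    intro z hz hzM
    by_cases hcase : ‖z‖ < r/2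
    · exact hball (show dist z 0 < r by rw [dist_zero_right]; linarith) hz
    · exact absurd ⟨mem_closedBall_zero_iff.2 hzM, by
        simpa [mem_ball, dist_zero_right] using hcase⟩ (fun h => hne ⟨z, h⟩)

/-- `√s ≤ 1 + s` in `ℝ≥0∞`. -/
lemma sqrt_le_one_add_aux (s : ℝ≥0∞) : s ^ (1/2 : ℝ) ≤ 1 + s := by
  rcases le_total s 1 with h | h
  · calc s ^ (1/2:ℝ) ≤ (1:ℝ≥0∞) ^ (1/2:ℝ) := ENNReal.rpow_le_rpow h (by norm_num)
    _ = 1 := ENNReal.one_rpow _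
    _ ≤ 1 + s := le_self_add
  · calc s ^ (1/2:ℝ) ≤ s ^ (1:ℝ) := ENNReal.rpow_le_rpow_of_exponent_le h (by norm_num)
    _ = s := ENNReal.rpow_one s
    _ ≤ 1 + s := le_add_self

theorem stmt7 (N : ℕ) (hN : 1 ≤ N) (p q : ℝ)
    (hp : 0 < p) (hq : 0 < q)
    -- the kernel K
    (K : EuclideanSpace ℝ (Fin N) → ℝ) (ρ c β : ℝ)
    (hρ : 0 < ρ) (hc : 0 < c) (hβ : 0 < β)
    (hKcont : ContinuousOn K {(0 : EuclideanSpace ℝ (Fin N))}ᶜ)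
    (hKpos : ∀ x : EuclideanSpace ℝ (Fin N), x ≠ 0 → 0 < K x)
    (hKliminf : ∃ ε : ℝ, 0 < ε ∧ ∀ᶠ x in nhdsWithin (0 : EuclideanSpace ℝ (Fin N)) {0}ᶜ, ε ≤ K x)
    (hKlow : ∀ x : EuclideanSpace ℝ (Fin N), ρ < ‖x‖ → c * ‖x‖ ^ (-β) ≤ K x)
    -- the nonnegative measurable function u
    (u : EuclideanSpace ℝ (Fin N) → ℝ → ℝ)
    (hu : Measurable fun w : EuclideanSpace ℝ (Fin N) × ℝ => u w.1 w.2)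
    (hupos : ∀ x t, 0 ≤ u x t)
    -- local integrability of (K∗u^p)u^q
    (hL1 : ∀ R : ℝ, 0 < R → ∀ T : ℝ, 0 < T →
      (∫⁻ t in Set.Ioc (0:ℝ) T, ∫⁻ x in Metric.ball (0 : EuclideanSpace ℝ (Fin N)) R,
        (∫⁻ y, ENNReal.ofReal (K (x - y) * u y t ^ p)) * ENNReal.ofReal (u x t ^ q)) < ⊤) :
    ∀ R : ℝ, 0 < R → ∀ T : ℝ, 0 < T →
      (∫⁻ t in Set.Ioc (0:ℝ) T, ∫⁻ x in Metric.ball (0 : EuclideanSpace ℝ (Fin N)) R,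
        ENNReal.ofReal (u x t ^ ((p + q) / 2))) < ⊤ := by
  intro R hR T hT
  -- nontriviality of the space (needed for `measure_singleton`)
  haveI : Nontrivial (EuclideanSpace ℝ (Fin N)) :=
    ⟨EuclideanSpace.single ⟨0, hN⟩ (1:ℝ), 0, by
      intro h
      have := congrArg (fun v => v ⟨0, hN⟩) h
      simp [EuclideanSpace.single] at this⟩
  -- lower bound on the kernel on the ball of radius 2R
  obtain ⟨δ, hδ, hδK⟩ := kernel_lower_aux K hKcont hKpos hKliminf (2*R)
  set μ := (volume : Measure (EuclideanSpace ℝ (Fin N))).restrict (Metric.ball (0:EuclideanSpace ℝ (Fin N)) R) with hμ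
  set A : ℝ → ℝ≥0∞ := fun t => ∫⁻ x, ENNReal.ofReal (u x t ^ p) ∂μ with hA
  set B : ℝ → ℝ≥0∞ := fun t => ∫⁻ x, ENNReal.ofReal (u x t ^ q) ∂μ with hB
  set δ' : ℝ≥0∞ := ENNReal.ofReal δ with hδ'
  have hδ'0 : δ' ≠ 0 := by simp [hδ', hδ]
  have hδ'top : δ' ≠ ⊤ := ENNReal.ofReal_ne_top
  -- Step 1: Cauchy-Schwarz in x
  have CS : ∀ t : ℝ, (∫⁻ x, ENNReal.ofReal (u x t ^ ((p + q) / 2)) ∂μ)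
      ≤ (A t * B t) ^ (1/2 : ℝ) := by
    intro t
    have hut : Measurable fun x : EuclideanSpace ℝ (Fin N) => u x t :=
      hu.comp (measurable_id.prodMk measurable_const)
    have hf : AEMeasurable (fun x => ENNReal.ofReal (u x t ^ (p/2))) μ :=
      ((hut.pow_const _).ennreal_ofReal).aemeasurable
    have hg : AEMeasurable (fun x => ENNReal.ofReal (u x t ^ (q/2))) μ :=
      ((hut.pow_const _).ennreal_ofReal).aemeasurable
    have h22 : (2:ℝ).HolderConjugate 2 := Real.HolderConjugate.two_two
    have key := ENNReal.lintegral_mul_le_Lp_mul_Lq μ h22 hf hg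
    have e1 : ∀ x, ENNReal.ofReal (u x t ^ ((p + q) / 2))
        = ((fun x => ENNReal.ofReal (u x t ^ (p/2))) * fun x => ENNReal.ofReal (u x t ^ (q/2))) x := by
      intro x
      simp only [Pi.mul_apply]
      rw [← ENNReal.ofReal_mul (Real.rpow_nonneg (hupos x t) _),
        ← Real.rpow_add' (hupos x t) (by positivity)]
      ring_nf
    have e2 : ∀ x, ENNReal.ofReal (u x t ^ (p/2)) ^ (2:ℝ) = ENNReal.ofReal (u x t ^ p) := by
      intro x
      rw [ENNReal.ofReal_rpow_of_nonneg (Real.rpow_nonneg (hupos x t) _) (by norm_num : (0:ℝ) ≤ 2),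
        ← Real.rpow_mul (hupos x t)]
      norm_num
    have e3 : ∀ x, ENNReal.ofReal (u x t ^ (q/2)) ^ (2:ℝ) = ENNReal.ofReal (u x t ^ q) := by
      intro x
      rw [ENNReal.ofReal_rpow_of_nonneg (Real.rpow_nonneg (hupos x t) _) (by norm_num : (0:ℝ) ≤ 2),
        ← Real.rpow_mul (hupos x t)]
      norm_num
    calc (∫⁻ x, ENNReal.ofReal (u x t ^ ((p + q) / 2)) ∂μ)
        = ∫⁻ x, ((fun x => ENNReal.ofReal (u x t ^ (p/2))) * fun x => ENNReal.ofReal (u x t ^ (q/2))) x ∂μ := by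
          simp_rw [e1]
      _ ≤ (∫⁻ x, ENNReal.ofReal (u x t ^ (p/2)) ^ (2:ℝ) ∂μ) ^ (1/2:ℝ) *
          (∫⁻ x, ENNReal.ofReal (u x t ^ (q/2)) ^ (2:ℝ) ∂μ) ^ (1/2:ℝ) := key
      _ = (A t) ^ (1/2:ℝ) * (B t) ^ (1/2:ℝ) := by rw [hA, hB]; simp_rw [e2, e3]
      _ = (A t * B t) ^ (1/2:ℝ) := (ENNReal.mul_rpow_of_nonneg _ _ (by norm_num)).symm
  -- Step 2: lower bound for the convolution term
  have key2 : ∀ t : ℝ, δ' * A t * B t ≤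
      ∫⁻ x, (∫⁻ y, ENNReal.ofReal (K (x - y) * u y t ^ p)) * ENNReal.ofReal (u x t ^ q) ∂μ := by
    intro t
    have inner : ∀ x ∈ Metric.ball (0:EuclideanSpace ℝ (Fin N)) R,
        δ' * A t ≤ ∫⁻ y, ENNReal.ofReal (K (x - y) * u y t ^ p) := by
      intro x hx
      calc δ' * A t ≤ ∫⁻ y, δ' * ENNReal.ofReal (u y t ^ p) ∂μ := lintegral_const_mul_le _ _
        _ ≤ ∫⁻ y, ENNReal.ofReal (K (x - y) * u y t ^ p) ∂μ := by
            refine lintegral_mono_ae ?_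
            have h1 : ∀ᵐ y ∂μ, y ∈ Metric.ball (0:EuclideanSpace ℝ (Fin N)) R := ae_restrict_mem measurableSet_ball
            have h2 : ∀ᵐ y ∂μ, y ≠ x := by
              refine ae_iff.2 ?_
              have : {y : EuclideanSpace ℝ (Fin N) | ¬ y ≠ x} = {x} := by ext y; simp
              rw [this, hμ, Measure.restrict_apply (measurableSet_singleton x)]
              exact measure_mono_null inter_subset_left (measure_singleton x)
            filter_upwards [h1, h2] with y hy hyx
            have hxy0 : x - y ≠ 0 := sub_ne_zero.2 (fun h => hyx h.symm)
            have hxyM : ‖x - y‖ ≤ 2 * R := by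
              have hxn : ‖x‖ < R := mem_ball_zero_iff.1 hx
              have hyn : ‖y‖ < R := mem_ball_zero_iff.1 hy
              calc ‖x - y‖ ≤ ‖x‖ + ‖y‖ := norm_sub_le x y
                _ ≤ 2 * R := by linarith
            rw [← ENNReal.ofReal_mul hδ.le]
            exact ENNReal.ofReal_le_ofReal
              (mul_le_mul_of_nonneg_right (hδK _ hxy0 hxyM) (Real.rpow_nonneg (hupos y t) _))
        _ ≤ ∫⁻ y, ENNReal.ofReal (K (x - y) * u y t ^ p) :=
            setLIntegral_le_lintegral _ _
    calc δ' * A t * B t = δ' * A t * ∫⁻ x, ENNReal.ofReal (u x t ^ q) ∂μ := rfl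
      _ ≤ ∫⁻ x, (δ' * A t) * ENNReal.ofReal (u x t ^ q) ∂μ := lintegral_const_mul_le _ _
      _ ≤ ∫⁻ x, (∫⁻ y, ENNReal.ofReal (K (x - y) * u y t ^ p)) * ENNReal.ofReal (u x t ^ q) ∂μ := by
          refine lintegral_mono_ae ?_
          filter_upwards [ae_restrict_mem measurableSet_ball] with x hx
          exact mul_le_mul_left (inner x hx) _
  -- Step 3: put everything together
  have L := hL1 R hR T hT
  have main : (∫⁻ t in Set.Ioc (0:ℝ) T, ∫⁻ x, ENNReal.ofReal (u x t ^ ((p + q) / 2)) ∂μ)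
      ≤ (δ'⁻¹) ^ (1/2:ℝ) * (∫⁻ t in Set.Ioc (0:ℝ) T, (1 + δ' * A t * B t)) := by
    calc (∫⁻ t in Set.Ioc (0:ℝ) T, ∫⁻ x, ENNReal.ofReal (u x t ^ ((p + q) / 2)) ∂μ)
        ≤ ∫⁻ t in Set.Ioc (0:ℝ) T, (A t * B t) ^ (1/2:ℝ) := lintegral_mono fun t => CS t
      _ ≤ ∫⁻ t in Set.Ioc (0:ℝ) T, (δ'⁻¹) ^ (1/2:ℝ) * (1 + δ' * A t * B t) := by
          refine lintegral_mono fun t => ?_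
          have hrw : A t * B t = δ'⁻¹ * (δ' * A t * B t) := by
            rw [← mul_assoc, ← mul_assoc, ENNReal.inv_mul_cancel hδ'0 hδ'top, one_mul]
          rw [hrw, ENNReal.mul_rpow_of_nonneg _ _ (by norm_num : (0:ℝ) ≤ 1/2)]
          exact mul_le_mul_right (sqrt_le_one_add_aux _) _
      _ = (δ'⁻¹) ^ (1/2:ℝ) * (∫⁻ t in Set.Ioc (0:ℝ) T, (1 + δ' * A t * B t)) :=
          lintegral_const_mul' _ _ (by
            exact ENNReal.rpow_ne_top_of_nonneg (by norm_num) (ENNReal.inv_ne_top.2 hδ'0))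
  have hsum : (∫⁻ t in Set.Ioc (0:ℝ) T, (1 + δ' * A t * B t))
      = (∫⁻ t in Set.Ioc (0:ℝ) T, (1:ℝ≥0∞)) + ∫⁻ t in Set.Ioc (0:ℝ) T, δ' * A t * B t :=
    lintegral_add_left measurable_const _
  have hone : (∫⁻ t in Set.Ioc (0:ℝ) T, (1:ℝ≥0∞)) = ENNReal.ofReal T := by
    simp [Real.volume_Ioc, hT.le]
  have habfin : (∫⁻ t in Set.Ioc (0:ℝ) T, δ' * A t * B t) < ⊤ :=
    lt_of_le_of_lt (lintegral_mono fun t => key2 t) L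
  refine lt_of_le_of_lt main ?_
  rw [hsum, hone]
  exact ENNReal.mul_lt_top
    (ENNReal.rpow_lt_top_of_nonneg (by norm_num) (ENNReal.inv_ne_top.2 hδ'0))
    (ENNReal.add_lt_top.2 ⟨ENNReal.ofReal_lt_top, habfin⟩)
end
end

section
/- There exist constants C > 0 and R₀ > ρ such that for every R ≥ R₀, every measurable function v : ℝ^N → [0,∞], and every x ∈ B_R(0): ∫_{ℝ^N} K(x−y) v(y) dy ≥ C R^{−β} ∫_{B_R(0)} v(y) dy. -/
open MeasureTheory Metric Set Filter
open scoped RealInnerProductSpace ENNReal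

noncomputable section

theorem stmt8 (N : ℕ) (hN : 1 ≤ N)
    -- the kernel K
    (K : EuclideanSpace ℝ (Fin N) → ℝ) (ρ c β : ℝ)
    (hρ : 0 < ρ) (hc : 0 < c) (hβ : 0 < β)
    (hKcont : ContinuousOn K {(0 : EuclideanSpace ℝ (Fin N))}ᶜ)
    (hKpos : ∀ x : EuclideanSpace ℝ (Fin N), x ≠ 0 → 0 < K x)
    (hKliminf : ∃ ε : ℝ, 0 < ε ∧ ∀ᶠ x in nhdsWithin (0 : EuclideanSpace ℝ (Fin N)) {0}ᶜ, ε ≤ K x)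
    (hKlow : ∀ x : EuclideanSpace ℝ (Fin N), ρ < ‖x‖ → c * ‖x‖ ^ (-β) ≤ K x)
 :
    ∃ C : ℝ, 0 < C ∧ ∃ R₀ : ℝ, ρ < R₀ ∧ ∀ R ≥ R₀,
      ∀ v : EuclideanSpace ℝ (Fin N) → ℝ≥0∞, Measurable v →
        ∀ x ∈ Metric.ball (0 : EuclideanSpace ℝ (Fin N)) R,
          ENNReal.ofReal (C * R ^ (-β)) * (∫⁻ y in Metric.ball (0 : EuclideanSpace ℝ (Fin N)) R, v y) ≤
            ∫⁻ y, ENNReal.ofReal (K (x - y)) * v y := by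
  classical
  haveI : Nonempty (Fin N) := ⟨⟨0, hN⟩⟩
  obtain ⟨ε, hε, hev⟩ := hKliminf
  -- get δ from the eventual bound near 0
  rw [eventually_nhdsWithin_iff, Metric.eventually_nhds_iff] at hev
  obtain ⟨δ, hδ, hδK⟩ := hev
  -- min of K on the compact annulus
  set A : Set (EuclideanSpace ℝ (Fin N)) := Metric.closedBall 0 ρ \ Metric.ball 0 δ with hA
  have hAcomp : IsCompact A := (isCompact_closedBall _ _).diff Metric.isOpen_ball
  have hA0 : (0 : EuclideanSpace ℝ (Fin N)) ∉ A := fun h => absurd h.2 (by simp [hδ])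
  have hAsub : A ⊆ {(0 : EuclideanSpace ℝ (Fin N))}ᶜ := fun z hz hz0 => hA0 (by simpa [Set.mem_singleton_iff.1 hz0] using hz)
  -- m : a positive lower bound on the annulus
  obtain ⟨m, hm, hmA⟩ : ∃ m : ℝ, 0 < m ∧ ∀ z ∈ A, m ≤ K z := by
    by_cases hAne : A.Nonempty
    · obtain ⟨z₀, hz₀, hz₀min⟩ := hAcomp.exists_isMinOn hAne (hKcont.mono hAsub)
      exact ⟨K z₀, hKpos z₀ (fun h => hA0 (h ▸ hz₀)), fun z hz => hz₀min hz⟩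
    · exact ⟨1, one_pos, fun z hz => absurd ⟨z, hz⟩ hAne⟩
  set C : ℝ := c * (2:ℝ) ^ (-β) with hC
  have hCpos : 0 < C := mul_pos hc (Real.rpow_pos_of_pos two_pos _)
  set μ : ℝ := min ε m with hμ
  have hμpos : 0 < μ := lt_min hε hm
  -- choose R₀ large
  have hR₀ : ∃ R₀ : ℝ, ρ < R₀ ∧ ∀ R ≥ R₀, C * R ^ (-β) ≤ μ := by
    have h2 : Tendsto (fun R : ℝ => C * R ^ (-β)) atTop (nhds (C * 0)) :=
      (tendsto_rpow_neg_atTop hβ).const_mul C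
    rw [mul_zero] at h2
    have := (h2.eventually_le_const hμpos).and (eventually_gt_atTop ρ)
    rw [eventually_atTop] at this
    obtain ⟨R₁, hR₁⟩ := this
    refine ⟨max R₁ (ρ + 1), lt_of_lt_of_le (by linarith) (le_max_right _ _), fun R hR => ?_⟩
    exact (hR₁ R (le_trans (le_max_left _ _) hR)).1
  obtain ⟨R₀, hρR₀, hR₀μ⟩ := hR₀
  refine ⟨C, hCpos, R₀, hρR₀, fun R hR v hv x hx => ?_⟩
  have hRpos : 0 < R := lt_of_lt_of_le (lt_trans hρ hρR₀) hR
  -- key pointwise bound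
  have key : ∀ z : EuclideanSpace ℝ (Fin N), z ≠ 0 → ‖z‖ < 2 * R → C * R ^ (-β) ≤ K z := by
    intro z hz0 hz2R
    rcases lt_or_ge ‖z‖ δ with h1 | h1
    · calc C * R ^ (-β) ≤ μ := hR₀μ R hR
        _ ≤ ε := min_le_left _ _
        _ ≤ K z := hδK (by simpa using h1) (by simpa using hz0)
    · rcases le_or_gt ‖z‖ ρ with h2 | h2
      · calc C * R ^ (-β) ≤ μ := hR₀μ R hR
          _ ≤ m := min_le_right _ _
          _ ≤ K z := hmA z ⟨by simpa using h2, by simp [h1, not_lt]⟩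
      · have hz2 : c * (2 * R) ^ (-β) ≤ c * ‖z‖ ^ (-β) :=
          mul_le_mul_of_nonneg_left
            (Real.rpow_le_rpow_of_nonpos (lt_trans hρ h2) hz2R.le (neg_nonpos.2 hβ.le)) hc.le
        have heq : C * R ^ (-β) = c * (2 * R) ^ (-β) := by
          rw [Real.mul_rpow (by norm_num) hRpos.le, hC]; ring
        rw [heq]
        exact le_trans hz2 (hKlow z h2)
  -- now the integral inequality
  have step1 : ∫⁻ y in Metric.ball (0 : EuclideanSpace ℝ (Fin N)) R, ENNReal.ofReal (C * R ^ (-β)) * v y ≤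
      ∫⁻ y in Metric.ball (0 : EuclideanSpace ℝ (Fin N)) R, ENNReal.ofReal (K (x - y)) * v y := by
    refine lintegral_mono_ae ?_
    have hxnull : (volume.restrict (Metric.ball (0 : EuclideanSpace ℝ (Fin N)) R)) {x} = 0 :=
      le_antisymm (le_trans (Measure.restrict_le_self _) (by simp)) bot_le
    filter_upwards [ae_restrict_mem measurableSet_ball,
      measure_eq_zero_iff_ae_notMem.1 hxnull] with y hy hyx
    have hzy : x - y ≠ 0 := sub_ne_zero.2 fun h => hyx (by simp [h])
    have hnorm : ‖x - y‖ < 2 * R := by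
      have h1 : ‖x‖ < R := by simpa using hx
      have h2 : ‖y‖ < R := by simpa using hy
      calc ‖x - y‖ ≤ ‖x‖ + ‖y‖ := norm_sub_le _ _
        _ < 2 * R := by linarith
    exact mul_le_mul_left (ENNReal.ofReal_le_ofReal (key _ hzy hnorm)) _
  calc ENNReal.ofReal (C * R ^ (-β)) * ∫⁻ y in Metric.ball (0 : EuclideanSpace ℝ (Fin N)) R, v y
      = ∫⁻ y in Metric.ball (0 : EuclideanSpace ℝ (Fin N)) R, ENNReal.ofReal (C * R ^ (-β)) * v y :=
        (lintegral_const_mul _ hv).symm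
    _ ≤ ∫⁻ y in Metric.ball (0 : EuclideanSpace ℝ (Fin N)) R, ENNReal.ofReal (K (x - y)) * v y := step1
    _ ≤ ∫⁻ y, ENNReal.ofReal (K (x - y)) * v y := setLIntegral_le_lintegral _ _
end
end

section
/- Set ℓ = (p+q)/2. There exist constants C > 0 and R₀ > ρ such that for every R ≥ R₀, every k > 0, every measurable function u : ℝ^N × (0,∞) → [0,∞), and every t > 0: ∫_{ℝ^N} (K∗u^p)(x,t) · u(x,t)^q · ψ(x,t)^k dx ≥ C R^{−β} ( ∫_{ℝ^N} u(x,t)^ℓ ψ(x,t)^k dx )². -/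
open MeasureTheory Metric Set Filter
open scoped RealInnerProductSpace ENNReal

noncomputable section

/-- The cutoff function `ψ(x,t) = ξ(|x|/R) ξ(t/R^γ)`. -/
def cutoff (N : ℕ) (ξ : ℝ → ℝ) (R γ : ℝ) (x : EuclideanSpace ℝ (Fin N)) (t : ℝ) : ℝ :=
  ξ (‖x‖ / R) * ξ (t / R ^ γ)

theorem stmt14 (N : ℕ) (hN : 1 ≤ N) (p q : ℝ)
    (hp : 0 < p) (hq : 0 < q)
    -- the kernel K
    (K : EuclideanSpace ℝ (Fin N) → ℝ) (ρ c β : ℝ)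
    (hρ : 0 < ρ) (hc : 0 < c) (hβ : 0 < β)
    (hKcont : ContinuousOn K {(0 : EuclideanSpace ℝ (Fin N))}ᶜ)
    (hKpos : ∀ x : EuclideanSpace ℝ (Fin N), x ≠ 0 → 0 < K x)
    (hKliminf : ∃ ε : ℝ, 0 < ε ∧ ∀ᶠ x in nhdsWithin (0 : EuclideanSpace ℝ (Fin N)) {0}ᶜ, ε ≤ K x)
    (hKlow : ∀ x : EuclideanSpace ℝ (Fin N), ρ < ‖x‖ → c * ‖x‖ ^ (-β) ≤ K x)
    -- the cutoff profile ξ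
    (ξ : ℝ → ℝ) (hξC1 : ContDiff ℝ 1 ξ)
    (hξone : ∀ s ∈ Set.Ioo (0:ℝ) 1, ξ s = 1)
    (hξzero : ∀ s : ℝ, 2 < s → ξ s = 0)
    (hξmem : ∀ s : ℝ, 0 ≤ s → ξ s ∈ Set.Icc (0:ℝ) 1)
    (hξd : ∃ Cξ : ℝ, ∀ s : ℝ, 0 ≤ s → |deriv ξ s| ≤ Cξ)
 :
    ∃ C : ℝ, 0 < C ∧ ∃ R₀ : ℝ, ρ < R₀ ∧ ∀ R ≥ R₀, ∀ γ : ℝ, 1 ≤ γ → ∀ k : ℝ, 0 < k →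
      ∀ u : EuclideanSpace ℝ (Fin N) → ℝ → ℝ, (Measurable fun w : EuclideanSpace ℝ (Fin N) × ℝ => u w.1 w.2) →
        (∀ x t, 0 ≤ u x t) → ∀ t : ℝ, 0 < t →
      ENNReal.ofReal (C * R ^ (-β)) *
          (∫⁻ x, ENNReal.ofReal (u x t ^ ((p + q) / 2) * cutoff N ξ R γ x t ^ k)) ^ 2 ≤
        ∫⁻ x, (∫⁻ y, ENNReal.ofReal (K (x - y) * u y t ^ p)) *
          ENNReal.ofReal (u x t ^ q * cutoff N ξ R γ x t ^ k) := by
  haveI : Nonempty (Fin N) := ⟨⟨0, hN⟩⟩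
  haveI : Nontrivial (EuclideanSpace ℝ (Fin N)) := inferInstance
  haveI : NullSingletonClass (volume : Measure (EuclideanSpace ℝ (Fin N))) := inferInstance
  -- extract a lower bound near 0
  obtain ⟨ε, hε, hev⟩ := hKliminf
  obtain ⟨δ, hδ, hδK⟩ : ∃ δ > 0, ∀ z : EuclideanSpace ℝ (Fin N), z ≠ 0 → ‖z‖ < δ → ε ≤ K z := by
    rw [eventually_nhdsWithin_iff, Metric.eventually_nhds_iff] at hev
    obtain ⟨δ, hδ, h⟩ := hev
    exact ⟨δ, hδ, fun z hz hz' => h (by simpa [dist_zero_right] using hz') hz⟩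
  -- lower bound on the compact annulus
  set S : Set (EuclideanSpace ℝ (Fin N)) := closedBall 0 ρ \ ball 0 (δ/2) with hSdef
  have hSsub : S ⊆ {(0 : EuclideanSpace ℝ (Fin N))}ᶜ := by
    intro z hz
    simp only [hSdef, mem_diff, mem_closedBall, mem_ball, dist_zero_right, not_lt] at hz
    simp only [mem_compl_iff, mem_singleton_iff]
    intro h0
    rw [h0, norm_zero] at hz
    linarith [hz.2, hδ]
  obtain ⟨m₁, hm₁, hm₁K⟩ : ∃ m₁ > 0, ∀ z ∈ S, m₁ ≤ K z := by
    by_cases hne : S.Nonempty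
    · have hScomp : IsCompact S := (isCompact_closedBall _ _).diff isOpen_ball
      obtain ⟨z₀, hz₀S, hz₀min⟩ := hScomp.exists_isMinOn hne (hKcont.mono hSsub)
      exact ⟨K z₀, hKpos z₀ (by simpa using hSsub hz₀S), fun z hz => hz₀min hz⟩
    · exact ⟨1, one_pos, fun z hz => absurd ⟨z, hz⟩ hne⟩
  set m₀ : ℝ := min ε m₁ with hm₀def
  have hm₀ : 0 < m₀ := lt_min hε hm₁
  have hm₀K : ∀ z : EuclideanSpace ℝ (Fin N), z ≠ 0 → ‖z‖ ≤ ρ → m₀ ≤ K z := by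
    intro z hz hzρ
    rcases lt_or_ge ‖z‖ (δ/2) with h | h
    · exact le_trans (min_le_left _ _) (hδK z hz (by linarith))
    · refine le_trans (min_le_right _ _) (hm₁K z ?_)
      simp only [hSdef, mem_diff, mem_closedBall, mem_ball, dist_zero_right, not_lt]
      exact ⟨hzρ, h⟩
  -- the constant
  have h4β : (0:ℝ) < c * 4 ^ (-β) := mul_pos hc (Real.rpow_pos_of_pos (by norm_num) _)
  set C : ℝ := min m₀ (c * 4 ^ (-β)) with hCdef
  have hC : 0 < C := lt_min hm₀ h4β
  refine ⟨C, hC, max (ρ + 1) 1, lt_of_lt_of_le (by linarith) (le_max_left _ _), ?_⟩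
  intro R hR γ hγ k hk u hu hu0 t ht
  have hR1 : (1:ℝ) ≤ R := le_trans (le_max_right _ _) hR
  have hRρ : ρ + 1 ≤ R := le_trans (le_max_left _ _) hR
  have hRpos : (0:ℝ) < R := by linarith
  have hRb1 : R ^ (-β) ≤ 1 := Real.rpow_le_one_of_one_le_of_nonpos hR1 (by linarith)
  have hRbpos : 0 < R ^ (-β) := Real.rpow_pos_of_pos hRpos _
  have hCR : 0 ≤ C * R ^ (-β) := le_of_lt (mul_pos hC hRbpos)
  -- the kernel lower bound on the relevant region
  have hKR : ∀ z : EuclideanSpace ℝ (Fin N), z ≠ 0 → ‖z‖ ≤ 4 * R → C * R ^ (-β) ≤ K z := by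
    intro z hz hz4
    rcases le_or_gt ‖z‖ ρ with h | h
    · calc C * R ^ (-β) ≤ C * 1 :=
            mul_le_mul_of_nonneg_left hRb1 hC.le
        _ = C := mul_one _
        _ ≤ m₀ := min_le_left _ _
        _ ≤ K z := hm₀K z hz h
    · have hzpos : 0 < ‖z‖ := by linarith
      have h1 : (4 * R) ^ (-β) ≤ ‖z‖ ^ (-β) := by
        rcases eq_or_lt_of_le hz4 with h' | h'
        · rw [h']
        · exact le_of_lt (Real.rpow_lt_rpow_of_neg hzpos h' (by linarith))
      have h2 : (4 * R) ^ (-β) = 4 ^ (-β) * R ^ (-β) :=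
        Real.mul_rpow (by norm_num) hRpos.le
      calc C * R ^ (-β) ≤ (c * 4 ^ (-β)) * R ^ (-β) :=
            mul_le_mul_of_nonneg_right (min_le_right _ _) hRbpos.le
        _ = c * (4 * R) ^ (-β) := by rw [h2]; ring
        _ ≤ c * ‖z‖ ^ (-β) := mul_le_mul_of_nonneg_left h1 hc.le
        _ ≤ K z := hKlow z h
  -- basic facts about the cutoff
  have hRγpos : (0:ℝ) < R ^ γ := Real.rpow_pos_of_pos hRpos _
  have hcut_mem : ∀ x : EuclideanSpace ℝ (Fin N), cutoff N ξ R γ x t ∈ Set.Icc (0:ℝ) 1 := by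
    intro x
    have h1 := hξmem (‖x‖ / R) (div_nonneg (norm_nonneg _) hRpos.le)
    have h2 := hξmem (t / R ^ γ) (div_nonneg ht.le hRγpos.le)
    rw [cutoff]
    exact ⟨mul_nonneg h1.1 h2.1, mul_le_one₀ h1.2 h2.1 h2.2⟩
  have hcutk_nonneg : ∀ x : EuclideanSpace ℝ (Fin N), 0 ≤ cutoff N ξ R γ x t ^ k :=
    fun x => Real.rpow_nonneg (hcut_mem x).1 _
  have hcutk_le_one : ∀ x : EuclideanSpace ℝ (Fin N), cutoff N ξ R γ x t ^ k ≤ 1 :=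
    fun x => Real.rpow_le_one (hcut_mem x).1 (hcut_mem x).2 hk.le
  have hcut_zero : ∀ x : EuclideanSpace ℝ (Fin N), 2 * R < ‖x‖ → cutoff N ξ R γ x t ^ k = 0 := by
    intro x hx
    have : ξ (‖x‖ / R) = 0 := hξzero _ (by rw [lt_div_iff₀ hRpos]; linarith)
    rw [cutoff, this, zero_mul, Real.zero_rpow hk.ne']
  have hcut_supp : ∀ x : EuclideanSpace ℝ (Fin N), cutoff N ξ R γ x t ^ k ≠ 0 → ‖x‖ ≤ 2 * R := by
    intro x hx
    by_contra h
    exact hx (hcut_zero x (by linarith [lt_of_not_ge h]))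
  -- measurability
  have hut : Measurable fun x : EuclideanSpace ℝ (Fin N) => u x t :=
    hu.comp (measurable_id.prodMk measurable_const)
  have hcutm : Measurable fun x : EuclideanSpace ℝ (Fin N) => cutoff N ξ R γ x t := by
    have : Continuous fun x : EuclideanSpace ℝ (Fin N) => ξ (‖x‖ / R) * ξ (t / R ^ γ) :=
      (hξC1.continuous.comp (continuous_norm.div_const R)).mul continuous_const
    exact this.measurable
  set F : EuclideanSpace ℝ (Fin N) → ℝ≥0∞ :=
    fun x => ENNReal.ofReal (u x t ^ p * cutoff N ξ R γ x t ^ k) with hFdef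
  set G : EuclideanSpace ℝ (Fin N) → ℝ≥0∞ :=
    fun x => ENNReal.ofReal (u x t ^ q * cutoff N ξ R γ x t ^ k) with hGdef
  have hFm : Measurable F :=
    ((hut.pow measurable_const).mul (hcutm.pow measurable_const)).ennreal_ofReal
  have hGm : Measurable G :=
    ((hut.pow measurable_const).mul (hcutm.pow measurable_const)).ennreal_ofReal
  set A : ℝ≥0∞ := ∫⁻ x, F x with hAdef
  set B : ℝ≥0∞ := ∫⁻ x, G x with hBdef
  -- Step 1: Cauchy–Schwarz
  have key1 : (∫⁻ x, ENNReal.ofReal (u x t ^ ((p + q) / 2) * cutoff N ξ R γ x t ^ k)) ^ 2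
      ≤ A * B := by
    set f₁ : EuclideanSpace ℝ (Fin N) → ℝ≥0∞ :=
      fun x => ENNReal.ofReal (u x t ^ (p/2) * cutoff N ξ R γ x t ^ (k/2)) with hf₁def
    set g₁ : EuclideanSpace ℝ (Fin N) → ℝ≥0∞ :=
      fun x => ENNReal.ofReal (u x t ^ (q/2) * cutoff N ξ R γ x t ^ (k/2)) with hg₁def
    have hf₁m : Measurable f₁ :=
      ((hut.pow measurable_const).mul (hcutm.pow measurable_const)).ennreal_ofReal
    have hg₁m : Measurable g₁ :=
      ((hut.pow measurable_const).mul (hcutm.pow measurable_const)).ennreal_ofReal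
    have hpq2 : Real.HolderConjugate 2 2 := Real.HolderConjugate.two_two
    have CS := ENNReal.lintegral_mul_le_Lp_mul_Lq volume hpq2 hf₁m.aemeasurable hg₁m.aemeasurable
    have e1 : ∀ x : EuclideanSpace ℝ (Fin N),
        (f₁ * g₁) x = ENNReal.ofReal (u x t ^ ((p + q) / 2) * cutoff N ξ R γ x t ^ k) := by
      intro x
      have hu0' := hu0 x t
      have hc0 := (hcut_mem x).1
      simp only [Pi.mul_apply, hf₁def, hg₁def]
      rw [← ENNReal.ofReal_mul (mul_nonneg (Real.rpow_nonneg hu0' _) (Real.rpow_nonneg hc0 _))]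
      congr 1
      rw [mul_mul_mul_comm, ← Real.rpow_add_of_nonneg hu0' (by linarith) (by linarith),
        ← Real.rpow_add_of_nonneg hc0 (by linarith) (by linarith)]
      rw [show p / 2 + q / 2 = (p + q) / 2 from by ring, show k / 2 + k / 2 = k from by ring]
    have e2 : ∀ x : EuclideanSpace ℝ (Fin N), f₁ x ^ (2:ℝ) = F x := by
      intro x
      have hu0' := hu0 x t
      have hc0 := (hcut_mem x).1
      simp only [hf₁def, hFdef]
      rw [ENNReal.ofReal_rpow_of_nonneg
        (mul_nonneg (Real.rpow_nonneg hu0' _) (Real.rpow_nonneg hc0 _)) (by norm_num)]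
      congr 1
      rw [Real.mul_rpow (Real.rpow_nonneg hu0' _) (Real.rpow_nonneg hc0 _),
        ← Real.rpow_mul hu0', ← Real.rpow_mul hc0]
      rw [show p / 2 * 2 = p from by ring, show k / 2 * 2 = k from by ring]
    have e3 : ∀ x : EuclideanSpace ℝ (Fin N), g₁ x ^ (2:ℝ) = G x := by
      intro x
      have hu0' := hu0 x t
      have hc0 := (hcut_mem x).1
      simp only [hg₁def, hGdef]
      rw [ENNReal.ofReal_rpow_of_nonneg
        (mul_nonneg (Real.rpow_nonneg hu0' _) (Real.rpow_nonneg hc0 _)) (by norm_num)]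
      congr 1
      rw [Real.mul_rpow (Real.rpow_nonneg hu0' _) (Real.rpow_nonneg hc0 _),
        ← Real.rpow_mul hu0', ← Real.rpow_mul hc0]
      rw [show q / 2 * 2 = q from by ring, show k / 2 * 2 = k from by ring]
    have CS' : (∫⁻ x, ENNReal.ofReal (u x t ^ ((p + q) / 2) * cutoff N ξ R γ x t ^ k))
        ≤ A ^ (1/2 : ℝ) * B ^ (1/2 : ℝ) := by
      calc (∫⁻ x, ENNReal.ofReal (u x t ^ ((p + q) / 2) * cutoff N ξ R γ x t ^ k))
          = ∫⁻ x, (f₁ * g₁) x := by exact (lintegral_congr e1).symm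
        _ ≤ (∫⁻ x, f₁ x ^ (2:ℝ)) ^ (1/2 : ℝ) * (∫⁻ x, g₁ x ^ (2:ℝ)) ^ (1/2 : ℝ) := CS
        _ = A ^ (1/2 : ℝ) * B ^ (1/2 : ℝ) := by
            rw [lintegral_congr e2, lintegral_congr e3]
    have hsq : ∀ a : ℝ≥0∞, (a ^ (1/2 : ℝ)) ^ (2:ℕ) = a := by
      intro a
      rw [← ENNReal.rpow_natCast (a ^ (1/2 : ℝ)) 2, ← ENNReal.rpow_mul]
      norm_num
    calc (∫⁻ x, ENNReal.ofReal (u x t ^ ((p + q) / 2) * cutoff N ξ R γ x t ^ k)) ^ 2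
        ≤ (A ^ (1/2 : ℝ) * B ^ (1/2 : ℝ)) ^ 2 := pow_le_pow_left' CS' 2
      _ = A * B := by rw [mul_pow, hsq, hsq]
  -- Step 2: lower bound for the convolution term
  have hI : ∀ x : EuclideanSpace ℝ (Fin N), ‖x‖ ≤ 2 * R →
      ENNReal.ofReal (C * R ^ (-β)) * A ≤ ∫⁻ y, ENNReal.ofReal (K (x - y) * u y t ^ p) := by
    intro x hx
    have hae : ∀ᵐ y : EuclideanSpace ℝ (Fin N),
        ENNReal.ofReal (C * R ^ (-β)) * F y ≤ ENNReal.ofReal (K (x - y) * u y t ^ p) := by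
      have h0 : (volume : Measure (EuclideanSpace ℝ (Fin N))) {x} = 0 := measure_singleton x
      filter_upwards [compl_mem_ae_iff.mpr h0] with y hy
      have hyx : y ≠ x := hy
      by_cases hψy : cutoff N ξ R γ y t ^ k = 0
      · simp only [hFdef, hψy, mul_zero, ENNReal.ofReal_zero]
        exact zero_le
      · have hy2R : ‖y‖ ≤ 2 * R := hcut_supp y hψy
        have hzne : x - y ≠ 0 := sub_ne_zero.mpr (Ne.symm hyx)
        have hnorm : ‖x - y‖ ≤ 4 * R := (norm_sub_le _ _).trans (by linarith)
        have hK := hKR _ hzne hnorm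
        simp only [hFdef]
        rw [← ENNReal.ofReal_mul hCR]
        apply ENNReal.ofReal_le_ofReal
        have hup : (0:ℝ) ≤ u y t ^ p := Real.rpow_nonneg (hu0 y t) _
        have h1 : C * R ^ (-β) * cutoff N ξ R γ y t ^ k ≤ K (x - y) :=
          le_trans (mul_le_of_le_one_right hCR (hcutk_le_one y)) hK
        calc C * R ^ (-β) * (u y t ^ p * cutoff N ξ R γ y t ^ k)
            = (C * R ^ (-β) * cutoff N ξ R γ y t ^ k) * u y t ^ p := by ring
          _ ≤ K (x - y) * u y t ^ p := mul_le_mul_of_nonneg_right h1 hup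
    calc ENNReal.ofReal (C * R ^ (-β)) * A
        = ∫⁻ y, ENNReal.ofReal (C * R ^ (-β)) * F y := (lintegral_const_mul _ hFm).symm
      _ ≤ ∫⁻ y, ENNReal.ofReal (K (x - y) * u y t ^ p) := lintegral_mono_ae hae
  have key2 : ENNReal.ofReal (C * R ^ (-β)) * (A * B)
      ≤ ∫⁻ x, (∫⁻ y, ENNReal.ofReal (K (x - y) * u y t ^ p)) *
          ENNReal.ofReal (u x t ^ q * cutoff N ξ R γ x t ^ k) := by
    calc ENNReal.ofReal (C * R ^ (-β)) * (A * B)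
        = (ENNReal.ofReal (C * R ^ (-β)) * A) * B := by rw [mul_assoc]
      _ = ∫⁻ x, (ENNReal.ofReal (C * R ^ (-β)) * A) * G x := (lintegral_const_mul _ hGm).symm
      _ ≤ ∫⁻ x, (∫⁻ y, ENNReal.ofReal (K (x - y) * u y t ^ p)) * G x := by
          apply lintegral_mono
          intro x
          rcases le_or_gt ‖x‖ (2 * R) with h | h
          · exact mul_le_mul_left (hI x h) _
          · have : G x = 0 := by
              simp only [hGdef, hcut_zero x h, mul_zero, ENNReal.ofReal_zero]
            simp only [this, mul_zero, le_refl]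
      _ = ∫⁻ x, (∫⁻ y, ENNReal.ofReal (K (x - y) * u y t ^ p)) *
          ENNReal.ofReal (u x t ^ q * cutoff N ξ R γ x t ^ k) := rfl
  calc ENNReal.ofReal (C * R ^ (-β)) *
        (∫⁻ x, ENNReal.ofReal (u x t ^ ((p + q) / 2) * cutoff N ξ R γ x t ^ k)) ^ 2
      ≤ ENNReal.ofReal (C * R ^ (-β)) * (A * B) := mul_le_mul_right key1 _
    _ ≤ _ := key2
end
end
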